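/- Let r ≥ 2 and let p' > r be an integer with gcd(r,p') = 1. Let ζ ∈ P_r be dominant (⟨ζ, α_i⟩ a nonnegative integer for all i) with ⟨ζ, ε_1 − ε_r⟩ ≤ p' − r. Define F(σ, α) = (rp'/2)‖α‖² − p'⟨α, δ⟩ + r⟨α, σ•(ζ+δ)⟩ − ⟨δ, σ•(ζ+δ) − ζ − δ⟩. Let μ ∈ P_r and suppose w ∈ S_r and λ ∈ Q_r satisfy rμ − δ + w•δ = rλ. Then for every x ∈ ℚ, both sets T_μ(x) = {(α,σ) : α ∈ μ + Q_r, σ ∈ S_r, F(σ,α) = x} and T_0(x) = {(α,σ) : α ∈ Q_r, σ ∈ S_r, F(σ,α) = x} are finite, and sign(w) · Σ_{(α,σ) ∈ T_μ(x)} sign(σ) = Σ_{(α,σ) ∈ T_0(x)} sign(σ). (In other words, (−1)^{ℓ(w)}·χ̄^{r,r,p';μ}_{0,ζ} = χ̄^{r,r,p'}_{0,ζ}, with the sign depending only on μ.) -/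

import Mathlib

/-!
Put `d = μ - λ`, so that `r • d = δ - w • δ`. Since `w` is an isometry and
`‖δ - w • δ‖² = 2 ⟨δ, δ - w • δ⟩`, the bijection `(β, τ) ↦ (w • β + d, w τ)` of `V × S_r`
preserves `F`; it maps `Q_r` onto `μ + Q_r` and multiplies `sign` by `sign w`, hence carries
`T_0(x)` onto `T_μ(x)`. Finiteness: for fixed `σ`, `F(σ, ·)` is a positive definite quadratic
function, so each of its level sets contains finitely many integral points.
-/

open Finset

noncomputable section

/-- Inner product `⟨u,v⟩ = Σ_i u i * v i` on `ℚ^r`. -/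
def ip {r : ℕ} (u v : Fin r → ℚ) : ℚ := ∑ i, u i * v i

/-- Action of `S_r` permuting coordinates: `(w • v) i = v (w⁻¹ i)`. -/
def pact {r : ℕ} (w : Equiv.Perm (Fin r)) (v : Fin r → ℚ) : Fin r → ℚ := fun i => v (w⁻¹ i)

/-- The Weyl vector `δ`, whose (1-indexed) `i`-th coordinate is `(r+1-2i)/2`. -/
def weylδ (r : ℕ) : Fin r → ℚ := fun j => ((r : ℚ) - 1 - 2 * ((j : ℕ) : ℚ)) / 2

/-- Membership in `V = {v : Fin r → ℚ | Σ_i v i = 0}`. -/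
def memV {r : ℕ} (v : Fin r → ℚ) : Prop := ∑ i, v i = 0

/-- Membership in the root lattice `Q_r`. -/
def memQ {r : ℕ} (v : Fin r → ℚ) : Prop := memV v ∧ ∀ i, ∃ m : ℤ, v i = (m : ℚ)

/-- Membership in the weight lattice `P_r`. -/
def memP {r : ℕ} (v : Fin r → ℚ) : Prop := memV v ∧ ∀ i j, ∃ m : ℤ, v i - v j = (m : ℚ)

/-- The first fundamental weight `Λ₁ = ε₁ - (1/r)(ε₁ + ⋯ + ε_r)`. -/
def Lam1 (r : ℕ) : Fin r → ℚ := fun j => (if (j : ℕ) = 0 then 1 else 0) - 1 / (r : ℚ)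

/-- The simple roots, 0-indexed: `srootF i = ε_{i+1} - ε_{i+2}` in 1-indexed notation. -/
def srootF {r : ℕ} (i : Fin (r - 1)) : Fin r → ℚ :=
  fun j => (if (j : ℕ) = (i : ℕ) then 1 else 0) - (if (j : ℕ) = (i : ℕ) + 1 then 1 else 0)

/-- The highest root `θ = ε₁ - ε_r`. -/
def hroot (r : ℕ) : Fin r → ℚ :=
  fun j => (if (j : ℕ) = 0 then 1 else 0) - (if (j : ℕ) = r - 1 then 1 else 0)

/-- The set `Π_{r,n}` of weights of `L_r(nΛ₁)`:
all `nΛ₁ - a₁α₁ - ⋯ - a_{r-1}α_{r-1}` with `n ≥ a₁ ≥ ⋯ ≥ a_{r-1} ≥ 0`. -/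
def PiWts (r n : ℕ) : Set (Fin r → ℚ) :=
  {v | ∃ a : Fin (r - 1) → ℤ, (∀ i, 0 ≤ a i) ∧ (∀ i, a i ≤ (n : ℤ)) ∧
        (∀ i j, i ≤ j → a j ≤ a i) ∧
        v = (n : ℚ) • Lam1 r - ∑ i, (a i : ℚ) • srootF i}

/-- The exponent `F(σ,α) = (rp'/2)‖α‖² - p'⟨α,δ⟩ + r⟨α,σ•(ζ+δ)⟩ - ⟨δ, σ•(ζ+δ) - ζ - δ⟩`. -/
def Fexp (r p' : ℕ) (ζ : Fin r → ℚ) (σ : Equiv.Perm (Fin r)) (α : Fin r → ℚ) : ℚ :=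
  ((r : ℚ) * p' / 2) * ip α α - p' * ip α (weylδ r)
    + r * ip α (pact σ (ζ + weylδ r))
    - ip (weylδ r) (pact σ (ζ + weylδ r) - ζ - weylδ r)

lemma ip_eq_dotProduct {r : ℕ} (u v : Fin r → ℚ) : ip u v = u ⬝ᵥ v := rfl

section Pact

variable {r : ℕ}

lemma pact_eq_comp (w : Equiv.Perm (Fin r)) (v : Fin r → ℚ) : pact w v = v ∘ w.symm := rfl

lemma pact_mul (w τ : Equiv.Perm (Fin r)) (v : Fin r → ℚ) :
    pact (w * τ) v = pact w (pact τ v) := rfl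

@[simp]
lemma pact_inv_pact (w : Equiv.Perm (Fin r)) (v : Fin r → ℚ) : pact w⁻¹ (pact w v) = v := by
  funext i; simp [pact]

@[simp]
lemma pact_dotProduct_pact (w : Equiv.Perm (Fin r)) (u v : Fin r → ℚ) :
    pact w u ⬝ᵥ pact w v = u ⬝ᵥ v :=
  comp_equiv_dotProduct_comp_equiv u v w.symm

lemma sub_pact_dotProduct_self (w : Equiv.Perm (Fin r)) (v : Fin r → ℚ) :
    (v - pact w v) ⬝ᵥ (v - pact w v) = 2 * (v ⬝ᵥ (v - pact w v)) := by
  simp only [sub_dotProduct, dotProduct_sub, pact_dotProduct_pact, dotProduct_comm (pact w v) v]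
  ring

end Pact

def rootLattice (r : ℕ) : AddSubgroup (Fin r → ℚ) where
  carrier := {v | memQ v}
  add_mem' {u v} hu hv := by
    refine ⟨show ∑ i, (u i + v i) = 0 by rw [sum_add_distrib, hu.1, hv.1, add_zero], fun i => ?_⟩
    obtain ⟨m, hm⟩ := hu.2 i
    obtain ⟨n, hn⟩ := hv.2 i
    exact ⟨m + n, by simp [hm, hn]⟩
  zero_mem' := ⟨by simp [memV], fun _ => ⟨0, by simp⟩⟩
  neg_mem' {v} hv := by
    refine ⟨show ∑ i, -v i = 0 by rw [sum_neg_distrib, hv.1, neg_zero], fun i => ?_⟩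
    obtain ⟨m, hm⟩ := hv.2 i
    exact ⟨-m, by simp [hm]⟩

lemma mem_rootLattice {r : ℕ} {v : Fin r → ℚ} : v ∈ rootLattice r ↔ memQ v := Iff.rfl

lemma pact_mem_rootLattice {r : ℕ} (w : Equiv.Perm (Fin r)) {v : Fin r → ℚ}
    (hv : v ∈ rootLattice r) : pact w v ∈ rootLattice r :=
  ⟨by simpa [memV, pact_eq_comp] using (Equiv.sum_comp w.symm v).trans hv.1,
    fun i => hv.2 (w.symm i)⟩

lemma pact_mem_rootLattice_iff {r : ℕ} (w : Equiv.Perm (Fin r)) {v : Fin r → ℚ} :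
    pact w v ∈ rootLattice r ↔ v ∈ rootLattice r :=
  ⟨fun h => by simpa using pact_mem_rootLattice w⁻¹ h, pact_mem_rootLattice w⟩

lemma Fexp_eq_quadratic (r p' : ℕ) (ζ : Fin r → ℚ) (σ : Equiv.Perm (Fin r)) (α : Fin r → ℚ) :
    Fexp r p' ζ σ α = (r * p' / 2 : ℚ) * (α ⬝ᵥ α)
      + α ⬝ᵥ ((r : ℚ) • pact σ (ζ + weylδ r) - (p' : ℚ) • weylδ r)
      - weylδ r ⬝ᵥ (pact σ (ζ + weylδ r) - ζ - weylδ r) := by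
  simp only [Fexp, ip_eq_dotProduct, dotProduct_sub, dotProduct_smul, smul_eq_mul]
  ring

lemma Fexp_mul_pact_add {r : ℕ} (hr : (r : ℚ) ≠ 0) (p' : ℕ) (ζ : Fin r → ℚ)
    {w : Equiv.Perm (Fin r)} {d : Fin r → ℚ} (hd : (r : ℚ) • d = weylδ r - pact w (weylδ r))
    (τ : Equiv.Perm (Fin r)) (β : Fin r → ℚ) :
    Fexp r p' ζ (w * τ) (pact w β + d) = Fexp r p' ζ τ β := by
  simp only [Fexp, ip_eq_dotProduct, pact_mul, add_dotProduct, dotProduct_add, dotProduct_sub,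
    pact_dotProduct_pact]
  set δ := weylδ r
  set R := pact τ (ζ + δ)
  have hβ : (r : ℚ) * (pact w β ⬝ᵥ d) = pact w β ⬝ᵥ δ - β ⬝ᵥ δ := by
    rw [← smul_eq_mul, ← dotProduct_smul, hd, dotProduct_sub, pact_dotProduct_pact]
  have hR : (r : ℚ) * (pact w R ⬝ᵥ d) = pact w R ⬝ᵥ δ - R ⬝ᵥ δ := by
    rw [← smul_eq_mul, ← dotProduct_smul, hd, dotProduct_sub, pact_dotProduct_pact]
  have hdd : (r : ℚ) * (d ⬝ᵥ d) = 2 * (δ ⬝ᵥ d) := by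
    have := sub_pact_dotProduct_self w δ
    rw [← hd, smul_dotProduct, dotProduct_smul, dotProduct_smul, smul_eq_mul, smul_eq_mul,
      smul_eq_mul] at this
    exact mul_left_cancel₀ hr (by linear_combination this)
  rw [dotProduct_comm d (pact w β), dotProduct_comm d (pact w R), dotProduct_comm δ (pact w R),
    dotProduct_comm δ R, dotProduct_comm d δ]
  linear_combination (p' : ℚ) * hβ + hR + (p' / 2 : ℚ) * hdd

lemma finite_setOf_int_quadratic_le {c : ℚ} (hc : 0 < c) (b M : ℚ) :
    {m : ℤ | c * (m : ℚ) ^ 2 + b * m ≤ M}.Finite := by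
  set B : ℚ := 1 + (|M| + |b|) / c
  refine (Set.finite_Icc (-⌈B⌉) ⌈B⌉).subset fun m (hm : c * (m : ℚ) ^ 2 + b * m ≤ M) => ?_
  have hmB : |(m : ℚ)| ≤ B := by
    have hB : 0 ≤ (|M| + |b|) / c := by positivity
    rcases le_or_gt |(m : ℚ)| 1 with hm1 | hm1
    · linarith
    · have hbm : -(b * m) ≤ |b| * |(m : ℚ)| := by
        rw [← abs_mul]; exact neg_le_abs _
      have hcm : c * |(m : ℚ)| * |(m : ℚ)| ≤ (|M| + |b|) * |(m : ℚ)| := by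
        nlinarith [sq_abs (m : ℚ), le_abs_self M, abs_nonneg M]
      have := le_of_mul_le_mul_right hcm (by linarith)
      rw [← le_div_iff₀' hc] at this
      linarith
  have : |m| ≤ ⌈B⌉ := by exact_mod_cast (Int.cast_abs (R := ℚ) ▸ hmB).trans (Int.le_ceil B)
  exact abs_le.1 this

lemma finite_setOf_int_dotProduct_le {ι : Type*} [Fintype ι] {c : ℚ} (hc : 0 < c)
    (v : ι → ℚ) (M : ℚ) :
    {α : ι → ℚ | (∀ i, ∃ m : ℤ, α i = m) ∧ c * (α ⬝ᵥ α) + α ⬝ᵥ v ≤ M}.Finite := by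
  set K : ℚ := ∑ i, v i ^ 2 / (4 * c)
  have hsq : ∀ i (t : ℚ), 0 ≤ c * t ^ 2 + v i * t + v i ^ 2 / (4 * c) := fun i t => by
    have : c * t ^ 2 + v i * t + v i ^ 2 / (4 * c) = c * (t + v i / (2 * c)) ^ 2 := by
      field_simp; ring
    rw [this]; positivity
  refine ((Set.Finite.pi fun i => finite_setOf_int_quadratic_le hc (v i) (M + K)).image
    fun m i => (m i : ℚ)).subset ?_
  rintro α ⟨hint, hα⟩
  choose m hm using hint
  refine ⟨m, fun i _ => ?_, funext fun i => (hm i).symm⟩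
  have hsum : ∑ j, (c * α j ^ 2 + v j * α j + v j ^ 2 / (4 * c)) ≤ M + K := by
    simp only [sum_add_distrib, ← mul_sum, dotProduct, K, sq, mul_comm (v _)] at hα ⊢
    linarith
  have := (single_le_sum (fun j _ => hsq j (α j)) (mem_univ i)).trans hsum
  show c * (m i : ℚ) ^ 2 + v i * m i ≤ M + K
  rw [← hm i]
  linarith [div_nonneg (sq_nonneg (v i)) (by positivity : (0 : ℚ) ≤ 4 * c)]

lemma finite_setOf_memQ_Fexp_eq {r p' : ℕ} (hr : 0 < r) (hp' : 0 < p') (ζ : Fin r → ℚ)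
    (x : ℚ) :
    {ασ : (Fin r → ℚ) × Equiv.Perm (Fin r) | memQ ασ.1 ∧ Fexp r p' ζ ασ.2 ασ.1 = x}.Finite := by
  have hslice (σ : Equiv.Perm (Fin r)) : {α | memQ α ∧ Fexp r p' ζ σ α = x}.Finite :=
    (finite_setOf_int_dotProduct_le (by positivity : (0 : ℚ) < r * p' / 2)
      ((r : ℚ) • pact σ (ζ + weylδ r) - (p' : ℚ) • weylδ r)
      (x + weylδ r ⬝ᵥ (pact σ (ζ + weylδ r) - ζ - weylδ r))).subset fun α ⟨hα, hF⟩ =>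
      ⟨hα.2, by rw [Fexp_eq_quadratic] at hF; linarith⟩
  exact ((Set.finite_iUnion hslice).prod Set.finite_univ).subset fun ασ hασ =>
    ⟨Set.mem_iUnion.2 ⟨ασ.2, hασ⟩, trivial⟩

def shiftEquiv {r : ℕ} (w : Equiv.Perm (Fin r)) (d : Fin r → ℚ) :
    (Fin r → ℚ) × Equiv.Perm (Fin r) ≃ (Fin r → ℚ) × Equiv.Perm (Fin r) :=
  ((w.arrowCongr (Equiv.refl ℚ)).trans (Equiv.addRight d)).prodCongr (Equiv.mulLeft w)

lemma shiftEquiv_apply {r : ℕ} (w : Equiv.Perm (Fin r)) (d : Fin r → ℚ)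
    (q : (Fin r → ℚ) × Equiv.Perm (Fin r)) : shiftEquiv w d q = (pact w q.1 + d, w * q.2) :=
  rfl

lemma exists_memQ_pact_add_eq_add_iff {r : ℕ} {lam : Fin r → ℚ} (hlam : memQ lam)
    (μ : Fin r → ℚ) (w : Equiv.Perm (Fin r)) (β : Fin r → ℚ) :
    (∃ γ, memQ γ ∧ pact w β + (μ - lam) = μ + γ) ↔ memQ β := by
  simp only [← mem_rootLattice, ← pact_mem_rootLattice_iff w (v := β)]
  constructor
  · rintro ⟨γ, hγ, hβ⟩
    rw [eq_sub_of_add_eq hβ, show μ + γ - (μ - lam) = γ + lam by abel]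
    exact add_mem hγ hlam
  · intro hβ
    exact ⟨pact w β - lam, sub_mem hβ hlam, by abel⟩

theorem stmt4_general (r p' : ℕ) (hr : 2 ≤ r) (hrp' : r < p')
    (ζ : Fin r → ℚ)
    (μ : Fin r → ℚ) (w : Equiv.Perm (Fin r))
    (lam : Fin r → ℚ) (hlam : memQ lam)
    (h : (r : ℚ) • μ - weylδ r + pact w (weylδ r) = (r : ℚ) • lam)
    (x : ℚ) :
    ∃ (h1 : {ασ : (Fin r → ℚ) × Equiv.Perm (Fin r) |
              (∃ β, memQ β ∧ ασ.1 = μ + β) ∧ Fexp r p' ζ ασ.2 ασ.1 = x}.Finite)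
      (h2 : {ασ : (Fin r → ℚ) × Equiv.Perm (Fin r) |
              memQ ασ.1 ∧ Fexp r p' ζ ασ.2 ασ.1 = x}.Finite),
      (Equiv.Perm.sign w : ℤ) * ∑ ασ ∈ h1.toFinset, (Equiv.Perm.sign ασ.2 : ℤ)
        = ∑ ασ ∈ h2.toFinset, (Equiv.Perm.sign ασ.2 : ℤ) := by
  have hr0 : (r : ℚ) ≠ 0 := by exact_mod_cast (by omega : r ≠ 0)
  have hd : (r : ℚ) • (μ - lam) = weylδ r - pact w (weylδ r) := by
    rw [smul_sub, ← h]; abel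
  set e := shiftEquiv w (μ - lam)
  set T0 := {ασ : (Fin r → ℚ) × Equiv.Perm (Fin r) | memQ ασ.1 ∧ Fexp r p' ζ ασ.2 ασ.1 = x}
  set Tμ := {ασ : (Fin r → ℚ) × Equiv.Perm (Fin r) |
    (∃ β, memQ β ∧ ασ.1 = μ + β) ∧ Fexp r p' ζ ασ.2 ασ.1 = x}
  have hT0 : T0.Finite := finite_setOf_memQ_Fexp_eq (by omega) (Nat.zero_lt_of_lt hrp') ζ x
  have hmem (q) : q ∈ T0 ↔ e q ∈ Tμ := by
    simp only [T0, Tμ, Set.mem_ofPred_eq, e, shiftEquiv_apply, Fexp_mul_pact_add hr0 p' ζ hd,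
      exists_memQ_pact_add_eq_add_iff hlam]
  have hTμ : Tμ.Finite := (hT0.image e).subset fun q hq =>
    ⟨e.symm q, (hmem _).2 (by rwa [e.apply_symm_apply]), e.apply_symm_apply q⟩
  refine ⟨hTμ, hT0, ?_⟩
  rw [mul_sum]
  refine (sum_equiv e (fun q => by simp only [Set.Finite.mem_toFinset, hmem]) fun q _ => ?_).symm
  simp [e, shiftEquiv_apply, ← mul_assoc]

/-- under the same hypotheses as Statement 3, for every `x ∈ ℚ` the sets
`T_μ(x)` and `T_0(x)` are finite, and `sign(w) · Σ_{T_μ(x)} sign(σ) = Σ_{T_0(x)} sign(σ)`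
(i.e. `(-1)^{ℓ(w)} χ̄^{r,r,p';μ}_{0,ζ} = χ̄^{r,r,p'}_{0,ζ}`). -/
theorem stmt4 (r p' : ℕ) (hr : 2 ≤ r) (hrp' : r < p') (hcop : Nat.Coprime r p')
    (ζ : Fin r → ℚ) (hζP : memP ζ)
    (hdom : ∀ i : Fin (r - 1), ∃ m : ℕ, ip ζ (srootF i) = (m : ℚ))
    (hlevel : ip ζ (hroot r) ≤ (p' : ℚ) - r)
    (μ : Fin r → ℚ) (hμ : memP μ) (w : Equiv.Perm (Fin r))
    (lam : Fin r → ℚ) (hlam : memQ lam)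
    (h : (r : ℚ) • μ - weylδ r + pact w (weylδ r) = (r : ℚ) • lam)
    (x : ℚ) :
    ∃ (h1 : {ασ : (Fin r → ℚ) × Equiv.Perm (Fin r) |
              (∃ β, memQ β ∧ ασ.1 = μ + β) ∧ Fexp r p' ζ ασ.2 ασ.1 = x}.Finite)
      (h2 : {ασ : (Fin r → ℚ) × Equiv.Perm (Fin r) |
              memQ ασ.1 ∧ Fexp r p' ζ ασ.2 ασ.1 = x}.Finite),
      (Equiv.Perm.sign w : ℤ) * ∑ ασ ∈ h1.toFinset, (Equiv.Perm.sign ασ.2 : ℤ)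
        = ∑ ασ ∈ h2.toFinset, (Equiv.Perm.sign ασ.2 : ℤ) :=
  stmt4_general r p' hr hrp' ζ μ w lam hlam h x
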